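/- arXiv:2006.15523 — 8 statements merged into one kernel-verified Lean document; each statement's English description precedes it below -/
import Mathlib

section
/- In the Klein bottle group K = ⟨a, b | b⁻¹ab = a⁻¹⟩, every element of the coset a^{2k}⟨b⁴⟩ (k ∈ ℤ) has a unique square root in K, and that square root lies in a^k⟨b²⟩. -/
open scoped Pointwise

/-- The single relator `b⁻¹ * a * b * a` of the Klein bottle group
`K = ⟨a, b ∣ b⁻¹ a b = a⁻¹⟩`, with generator `0 = a`, `1 = b`. -/
def KleinRels : Set (FreeGroup (Fin 2)) :=
  {(FreeGroup.of 1)⁻¹ * FreeGroup.of 0 * FreeGroup.of 1 * FreeGroup.of 0}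

/-- The Klein bottle group. -/
abbrev KleinGroup := PresentedGroup KleinRels

def aK : KleinGroup := PresentedGroup.of 0
def bK : KleinGroup := PresentedGroup.of 1

/-!
Since `b a^p = a^(-p) b`, every element of `K` has the form `a^p b^q`. The exponent `q` is read
off by the homomorphism `K → ℤ` killing `a`, and `a` has infinite order because `K` maps onto the
infinite dihedral group. As `b²` is central, `(a^p b^q)²` has `b`-exponent `2q`, so a square root
of `a^(2k) b^(4m)` has `q = 2m`; its square is then `a^(2p) b^(4m)`, which forces `p = k`.
-/

section ConjEqInv

variable {G : Type*} [Group G] {a b : G}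

theorem inv_mul_zpow_mul_of_conj_eq_inv (h : b⁻¹ * a * b = a⁻¹) (p : ℤ) :
    b⁻¹ * a ^ p * b = a ^ (-p) := by
  have hconj := conj_zpow (a := b⁻¹) (b := a) (i := p)
  rw [inv_inv] at hconj
  rw [← hconj, h, inv_zpow, zpow_neg]

theorem mul_zpow_of_conj_eq_inv (h : b⁻¹ * a * b = a⁻¹) (p : ℤ) :
    b * a ^ p = a ^ (-p) * b := by
  have h' := inv_mul_zpow_mul_of_conj_eq_inv h (-p)
  rw [neg_neg] at h'
  rw [← h']
  group

theorem inv_mul_zpow_of_conj_eq_inv (h : b⁻¹ * a * b = a⁻¹) (p : ℤ) :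
    b⁻¹ * a ^ p = a ^ (-p) * b⁻¹ := by
  rw [← inv_mul_zpow_mul_of_conj_eq_inv h]
  group

theorem commute_sq_of_conj_eq_inv (h : b⁻¹ * a * b = a⁻¹) : Commute (b ^ 2) a := by
  have h₁ := mul_zpow_of_conj_eq_inv h 1
  have h₂ := mul_zpow_of_conj_eq_inv h (-1)
  simp only [zpow_one, zpow_neg, inv_inv] at h₁ h₂
  rw [Commute, SemiconjBy, sq, mul_assoc, h₁, ← mul_assoc, h₂, mul_assoc]

theorem exists_zpow_mul_zpow_eq_of_conj_eq_inv (h : b⁻¹ * a * b = a⁻¹) {x : G}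
    (hx : x ∈ Subgroup.closure {a, b}) : ∃ p q : ℤ, a ^ p * b ^ q = x := by
  induction hx using Subgroup.closure_induction_left with
  | one => exact ⟨0, 0, by simp⟩
  | mul_left s hs y _ ih =>
    obtain ⟨p, q, rfl⟩ := ih
    rcases hs with rfl | rfl
    · exact ⟨p + 1, q, by group⟩
    · refine ⟨-p, q + 1, ?_⟩
      rw [← mul_assoc, mul_zpow_of_conj_eq_inv h]
      group
  | inv_mul_cancel s hs y _ ih =>
    obtain ⟨p, q, rfl⟩ := ih
    rcases hs with rfl | rfl
    · exact ⟨p - 1, q, by group⟩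
    · refine ⟨-p, q - 1, ?_⟩
      rw [← mul_assoc, inv_mul_zpow_of_conj_eq_inv h]
      group

theorem zpow_mul_sq_zpow_sq_of_conj_eq_inv (h : b⁻¹ * a * b = a⁻¹) (p m : ℤ) :
    (a ^ p * (b ^ 2) ^ m) ^ 2 = a ^ (2 * p) * (b ^ 4) ^ m := by
  rw [((commute_sq_of_conj_eq_inv h).zpow_zpow m p).symm.mul_pow]
  group

end ConjEqInv

namespace KleinGroup

open Multiplicative

theorem inv_bK_mul_aK_mul_bK : bK⁻¹ * aK * bK = aK⁻¹ := by
  rw [← mul_eq_one_iff_eq_inv]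
  exact PresentedGroup.one_of_mem rfl

theorem closure_aK_bK : Subgroup.closure {aK, bK} = ⊤ := by
  rw [← PresentedGroup.closure_range_of KleinRels]
  congr 1
  ext x
  simp [Fin.exists_fin_two, aK, bK, eq_comm]

def bExponent : KleinGroup →* Multiplicative ℤ :=
  PresentedGroup.toGroup (f := ![1, ofAdd 1]) (by rintro _ rfl; simp)

theorem bExponent_aK : bExponent aK = 1 := PresentedGroup.toGroup.of _

theorem bExponent_bK : bExponent bK = ofAdd 1 := PresentedGroup.toGroup.of _

-- `DihedralGroup 0` is the infinite dihedral group, since `ZMod 0 = ℤ`.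
def toDihedralGroup : KleinGroup →* DihedralGroup 0 :=
  PresentedGroup.toGroup (f := ![.r 1, .sr 0]) (by rintro _ rfl; simp)

theorem toDihedralGroup_aK : toDihedralGroup aK = .r 1 := PresentedGroup.toGroup.of _

theorem zpow_aK_injective : Function.Injective (aK ^ · : ℤ → KleinGroup) := by
  intro p q hpq
  have h := congrArg toDihedralGroup hpq
  simp only [map_zpow, toDihedralGroup_aK, DihedralGroup.r_one_zpow] at h
  exact DihedralGroup.r.inj h

theorem exists_zpow_mul_zpow_eq (x : KleinGroup) : ∃ p q : ℤ, aK ^ p * bK ^ q = x :=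
  exists_zpow_mul_zpow_eq_of_conj_eq_inv inv_bK_mul_aK_mul_bK (closure_aK_bK ▸ Subgroup.mem_top x)

theorem sq_eq_aK_zpow_mul_iff {x : KleinGroup} {k m : ℤ} :
    x ^ 2 = aK ^ (2 * k) * (bK ^ 4) ^ m ↔ x = aK ^ k * (bK ^ 2) ^ m := by
  refine ⟨fun hx => ?_, fun hx => hx ▸ zpow_mul_sq_zpow_sq_of_conj_eq_inv inv_bK_mul_aK_mul_bK k m⟩
  obtain ⟨p, q, rfl⟩ := exists_zpow_mul_zpow_eq x
  have hq : q = 2 * m := by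
    have h := congrArg (toAdd ∘ bExponent) hx
    simp only [Function.comp_apply, map_pow, map_mul, map_zpow, bExponent_aK, bExponent_bK,
      one_zpow, one_mul, toAdd_pow, toAdd_zpow, toAdd_ofAdd, nsmul_eq_mul, Nat.cast_ofNat,
      smul_eq_mul, mul_one] at h
    omega
  rw [hq, zpow_mul, zpow_ofNat] at hx ⊢
  rw [zpow_mul_sq_zpow_sq_of_conj_eq_inv inv_bK_mul_aK_mul_bK, mul_left_inj] at hx
  have hp : p = k := by
    have h := zpow_aK_injective hx
    omega
  rw [hp]

end KleinGroup

/-- Every element of the coset `a^(2k)·⟨b⁴⟩` has a unique square root in the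
Klein bottle group, and that square root lies in `a^k·⟨b²⟩`. -/
theorem unique_sqrt_of_coset (k : ℤ) (g : KleinGroup)
    (hg : g ∈ (aK ^ (2 * k)) • ((Subgroup.closure {bK ^ 4} : Subgroup KleinGroup) : Set KleinGroup)) :
    (∃! x : KleinGroup, x ^ 2 = g) ∧
      ∀ x : KleinGroup, x ^ 2 = g →
        x ∈ (aK ^ k) • ((Subgroup.closure {bK ^ 2} : Subgroup KleinGroup) : Set KleinGroup) := by
  obtain ⟨_, hy, rfl⟩ := hg
  obtain ⟨m, rfl⟩ := Subgroup.mem_closure_singleton.mp hy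
  have hsq {x : KleinGroup} := KleinGroup.sq_eq_aK_zpow_mul_iff (x := x) (k := k) (m := m)
  refine ⟨⟨_, hsq.2 rfl, fun x hx => hsq.1 hx⟩, fun x hx => ?_⟩
  rw [hsq.1 hx]
  exact Set.smul_mem_smul_set (Subgroup.mem_closure_singleton.mpr ⟨m, rfl⟩)
end

section
/- In the Klein bottle group K = ⟨a, b | b⁻¹ab = a⁻¹⟩, an element commutes with all squares of elements of K if and only if it lies in the subgroup ⟨a, b²⟩. -/
/-!
`H = ⟨a, b²⟩` is abelian, because `b²` commutes with `a`, and it is the kernel of the parity of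
the exponent of `b`, a homomorphism `K → ℤ/2`; so it contains every square, and its elements
commute with all squares. Conversely, `K = H ∪ bH`, and `b` conjugates the square `a²` to `a⁻²`,
which differs from `a²` since `a` maps to a rotation of infinite order in the infinite dihedral
group. Hence no element of `bH` commutes with `a²`.
-/

namespace KleinGroup

section lift

variable {G : Type*} [Group G] (x y : G) (h : y⁻¹ * x * y * x = 1)

def lift : KleinGroup →* G :=
  PresentedGroup.toGroup (f := ![x, y]) (by rintro r rfl; simpa using h)

@[simp]
lemma lift_aK : lift x y h aK = x := PresentedGroup.toGroup.of _

@[simp]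
lemma lift_bK : lift x y h bK = y := PresentedGroup.toGroup.of _

end lift

lemma semiconjBy_bK_inv_aK : SemiconjBy bK⁻¹ aK aK⁻¹ := by
  have h : bK⁻¹ * aK * bK * aK = 1 := PresentedGroup.one_of_mem rfl
  rwa [SemiconjBy, eq_mul_inv_iff_mul_eq, eq_inv_iff_mul_eq_one]

lemma commute_aK_bK_sq : Commute aK (bK ^ 2) := by
  have h := semiconjBy_bK_inv_aK.inv_right.mul_left semiconjBy_bK_inv_aK
  rw [inv_inv, ← mul_inv_rev, ← sq] at h
  exact (Commute.inv_left_iff.mp h).symm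

def evenSubgroup : Subgroup KleinGroup := Subgroup.closure {aK, bK ^ 2}

lemma aK_mem_evenSubgroup : aK ∈ evenSubgroup := Subgroup.subset_closure (by simp)

lemma bK_sq_mem_evenSubgroup : bK ^ 2 ∈ evenSubgroup := Subgroup.subset_closure (by simp)

instance : IsMulCommutative evenSubgroup :=
  Subgroup.isMulCommutative_closure <| by
    rintro _ (rfl | rfl) _ (rfl | rfl)
    exacts [rfl, commute_aK_bK_sq, commute_aK_bK_sq.symm, rfl]

lemma mem_evenSubgroup_or_bK_inv_mul_mem (g : KleinGroup) :
    g ∈ evenSubgroup ∨ bK⁻¹ * g ∈ evenSubgroup := by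
  have hg : g ∈ Subgroup.closure (Set.range PresentedGroup.of) := by simp
  induction hg using Subgroup.closure_induction_left with
  | one => exact .inl (one_mem _)
  | mul_left s hs y _ ih =>
    obtain ⟨i, rfl⟩ := hs
    fin_cases i
    · change aK * y ∈ _ ∨ bK⁻¹ * (aK * y) ∈ _
      refine ih.imp (mul_mem aK_mem_evenSubgroup) fun h => ?_
      rw [← mul_assoc, semiconjBy_bK_inv_aK.eq, mul_assoc]
      exact mul_mem (inv_mem aK_mem_evenSubgroup) h
    · change bK * y ∈ _ ∨ bK⁻¹ * (bK * y) ∈ _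
      refine ih.symm.imp (fun h => ?_) fun h => by rwa [inv_mul_cancel_left]
      simpa [sq, mul_assoc] using mul_mem bK_sq_mem_evenSubgroup h
  | inv_mul_cancel s hs y _ ih =>
    obtain ⟨i, rfl⟩ := hs
    fin_cases i
    · change aK⁻¹ * y ∈ _ ∨ bK⁻¹ * (aK⁻¹ * y) ∈ _
      refine ih.imp (mul_mem (inv_mem aK_mem_evenSubgroup)) fun h => ?_
      rw [← mul_assoc, semiconjBy_bK_inv_aK.inv_right.eq, inv_inv, mul_assoc]
      exact mul_mem aK_mem_evenSubgroup h
    · change bK⁻¹ * y ∈ _ ∨ bK⁻¹ * (bK⁻¹ * y) ∈ _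
      refine ih.symm.imp id fun h => ?_
      simpa [sq, mul_assoc] using mul_mem (inv_mem bK_sq_mem_evenSubgroup) h

def parity : KleinGroup →* Multiplicative (ZMod 2) :=
  lift 1 (.ofAdd 1) (by decide)

@[simp]
lemma parity_aK : parity aK = 1 := lift_aK ..

@[simp]
lemma parity_bK : parity bK = .ofAdd 1 := lift_bK ..

lemma ker_parity : parity.ker = evenSubgroup := by
  have hle : evenSubgroup ≤ parity.ker := by
    rw [evenSubgroup, Subgroup.closure_le]
    rintro _ (rfl | rfl)
    · exact parity_aK
    · rw [SetLike.mem_coe, MonoidHom.mem_ker, map_pow, parity_bK]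
      rfl
  refine le_antisymm (fun g hg => ?_) hle
  refine (mem_evenSubgroup_or_bK_inv_mul_mem g).resolve_right fun h => ?_
  have := hle h
  rw [MonoidHom.mem_ker, map_mul, map_inv, parity_bK, MonoidHom.mem_ker.mp hg] at this
  simp at this

lemma sq_mem_evenSubgroup (x : KleinGroup) : x ^ 2 ∈ evenSubgroup := by
  rw [← ker_parity, MonoidHom.mem_ker, map_pow]
  exact (show ∀ y : Multiplicative (ZMod 2), y ^ 2 = 1 by decide) _

lemma aK_inv_sq_ne : aK⁻¹ ^ 2 ≠ aK ^ 2 := fun h => by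
  have := congrArg (lift (DihedralGroup.r 1 : DihedralGroup 0) (.sr 0) (by simp)) h
  simp at this

lemma mem_evenSubgroup_of_commute_aK_sq {g : KleinGroup} (hg : Commute g (aK ^ 2)) :
    g ∈ evenSubgroup := by
  refine (mem_evenSubgroup_or_bK_inv_mul_mem g).resolve_right fun hbg => aK_inv_sq_ne ?_
  have hbg' : Commute (bK⁻¹ * g) (aK ^ 2) := setLike_mul_comm hbg (pow_mem aK_mem_evenSubgroup 2)
  have hb : Commute bK⁻¹ (aK ^ 2) := by simpa using hbg'.mul_left hg.inv_left
  exact mul_right_cancel ((semiconjBy_bK_inv_aK.pow_right 2).eq.symm.trans hb.eq)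

end KleinGroup

/-- An element of the Klein bottle group commutes with all squares
iff it lies in `⟨a, b²⟩`. -/
theorem commutes_with_squares_iff (g : KleinGroup) :
    (∀ x : KleinGroup, Commute g (x ^ 2)) ↔ g ∈ Subgroup.closure {aK, bK ^ 2} := by
  refine ⟨fun h => KleinGroup.mem_evenSubgroup_of_commute_aK_sq (h aK),
    fun (hg : g ∈ KleinGroup.evenSubgroup) x => ?_⟩
  exact setLike_mul_comm hg (KleinGroup.sq_mem_evenSubgroup x)
end

section
/- If A is an abelian normal subgroup of a group G with G/A abelian, then for any subset X ⊆ G, the subgroup A ∩ C_G(X) is normal in G. -/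
/-- If `A` is an abelian normal subgroup of `G` with `G/A` abelian, then for any
subset `X ⊆ G`, the subgroup `A ⊓ C_G(X)` is normal in `G`. -/
theorem inf_centralizer_normal {G : Type*} [Group G] (A : Subgroup G)
    (hN : A.Normal) (hA : ∀ x ∈ A, ∀ y ∈ A, Commute x y)
    (hQ : ∀ x y : G, x * y * x⁻¹ * y⁻¹ ∈ A) (X : Set G) :
    (A ⊓ Subgroup.centralizer X).Normal := by
  constructor
  intro n hn g
  rw [Subgroup.mem_inf] at hn ⊢
  obtain ⟨hnA, hnC⟩ := hn
  refine ⟨hN.conj_mem n hnA g, ?_⟩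
  rw [Subgroup.mem_centralizer_iff]
  intro x hx
  have ha : x⁻¹ * g⁻¹ * x * g ∈ A := by
    have := hQ x⁻¹ g⁻¹
    simpa [mul_assoc] using this
  have c2 : Commute n (x⁻¹ * g⁻¹ * x * g) := hA n hnA _ ha
  have c1 : Commute n x :=
    (Subgroup.mem_centralizer_iff.mp hnC x hx).symm
  have key : Commute n (g⁻¹ * x * g) := by
    have : g⁻¹ * x * g = x * (x⁻¹ * g⁻¹ * x * g) := by group
    rw [this]
    exact c1.mul_right c2
  calc x * (g * n * g⁻¹) = g * ((g⁻¹ * x * g) * n) * g⁻¹ := by group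
    _ = g * (n * (g⁻¹ * x * g)) * g⁻¹ := by rw [key.eq]
    _ = g * n * g⁻¹ * x := by group
end

section
/- Let G be a group satisfying the law [x², y²] = 1 (all squares commute). Let A be the subgroup generated by all squares in G. Then for any subset X ⊆ G, A ∩ C_G(X) is a normal subgroup of G. -/
/-- If all squares of a group `G` commute and `A` is the subgroup generated by all
squares, then for any subset `X ⊆ G`, `A ⊓ C_G(X)` is normal in `G`. -/
theorem squares_inf_centralizer_normal {G : Type*} [Group G]
    (law : ∀ x y : G, Commute (x ^ 2) (y ^ 2)) (X : Set G) :
    (Subgroup.closure {g : G | ∃ x : G, x ^ 2 = g} ⊓ Subgroup.centralizer X).Normal := by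
  set S : Set G := {g : G | ∃ x : G, x ^ 2 = g} with hS
  set A := Subgroup.closure S with hA
  -- every element of S commutes with every element of A
  have hSA : ∀ s ∈ S, ∀ b ∈ A, Commute s b := by
    intro s hs b hb
    induction hb using Subgroup.closure_induction with
    | mem y hy =>
        obtain ⟨u, hu⟩ := hs; obtain ⟨v, hv⟩ := hy
        subst hu; subst hv; exact law u v
    | one => exact Commute.one_right _
    | mul y z _ _ ihy ihz => exact ihy.mul_right ihz
    | inv y _ ih => exact ih.inv_right
  -- A is abelian
  have hcomm : ∀ a ∈ A, ∀ b ∈ A, Commute a b := by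
    intro a ha b hb
    induction ha using Subgroup.closure_induction with
    | mem y hy => exact hSA y hy b hb
    | one => exact Commute.one_left _
    | mul y z _ _ ihy ihz => exact ihy.mul_left ihz
    | inv y _ ih => exact ih.inv_left
  -- A is normal (conjugation-invariant)
  have hnorm : ∀ a ∈ A, ∀ g : G, g * a * g⁻¹ ∈ A := by
    intro a ha g
    induction ha using Subgroup.closure_induction with
    | mem y hy =>
        obtain ⟨u, hu⟩ := hy
        apply Subgroup.subset_closure
        exact ⟨g * u * g⁻¹, by subst hu; simp [pow_two, mul_assoc]⟩
    | one => simpa using A.one_mem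
    | mul y z _ _ ihy ihz =>
        have : g * (y * z) * g⁻¹ = (g * y * g⁻¹) * (g * z * g⁻¹) := by group
        rw [this]; exact A.mul_mem ihy ihz
    | inv y _ ih =>
        have : g * y⁻¹ * g⁻¹ = (g * y * g⁻¹)⁻¹ := by group
        rw [this]; exact A.inv_mem ih
  -- commutators lie in A
  have hcommutator : ∀ g x : G, x⁻¹ * g⁻¹ * x * g ∈ A := by
    intro g x
    have h1 : (x⁻¹ : G) ^ 2 ∈ A := Subgroup.subset_closure ⟨x⁻¹, rfl⟩
    have h2 : ((x * g⁻¹ : G)) ^ 2 ∈ A := Subgroup.subset_closure ⟨x * g⁻¹, rfl⟩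
    have h3 : (g : G) ^ 2 ∈ A := Subgroup.subset_closure ⟨g, rfl⟩
    have : x⁻¹ * g⁻¹ * x * g = x⁻¹ ^ 2 * (x * g⁻¹) ^ 2 * g ^ 2 := by simp [pow_two, mul_assoc]
    rw [this]; exact A.mul_mem (A.mul_mem h1 h2) h3
  constructor
  intro n hn g
  obtain ⟨hnA, hnC⟩ := hn
  refine ⟨hnorm n hnA g, ?_⟩
  show g * n * g⁻¹ ∈ Subgroup.centralizer X
  rw [Subgroup.mem_centralizer_iff]
  intro x hx
  have hxn : x * n = n * x := Subgroup.mem_centralizer_iff.mp hnC x hx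
  -- g⁻¹ * x * g = x * c with c ∈ A
  set c := x⁻¹ * g⁻¹ * x * g with hc
  have hcA : c ∈ A := hcommutator g x
  have hnc : n * c = c * n := (hcomm n hnA c hcA).eq
  have key : n * (g⁻¹ * x * g) = (g⁻¹ * x * g) * n := by
    have h1 : g⁻¹ * x * g = x * c := by rw [hc]; group
    rw [h1, ← mul_assoc, ← hxn, mul_assoc, hnc, ← mul_assoc]
  calc x * (g * n * g⁻¹) = g * (g⁻¹ * x * g) * n * g⁻¹ := by group
    _ = g * (n * (g⁻¹ * x * g)) * g⁻¹ := by rw [mul_assoc g, key]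
    _ = g * n * g⁻¹ * x := by group
end

section
/- Let G = (V₄ × ⟨b⟩) ⋉ ℤ³ as above, and K = ⟨a₁a₂a₃, b⟩ ≅ Klein bottle group. Then K is not a retract of G, i.e., there is no homomorphism ρ: G → K that restricts to the identity on K. -/
/-! The group `G = (V₄ × ⟨b⟩) ⋉ ℤ³` with `a_i^b = a_i⁻¹`, `a_i^{d_i} = a_i`,
`a_i^{d_j} = a_i⁻¹` for `i ≠ j`, where `V₄ = ZMod 2 × ZMod 2`,
`d₁ = (1,0)`, `d₂ = (0,1)`, `d₃ = (1,1)`. -/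

abbrev V4 := Multiplicative (ZMod 2 × ZMod 2)

/-- The top group `V₄ × ⟨b⟩`. -/
abbrev TopG := V4 × Multiplicative ℤ

/-- The base group `ℤ³` (written multiplicatively). -/
abbrev Z3 := Fin 3 → Multiplicative ℤ

/-- Sign associated to an element of `ZMod 2`. -/
def sgn : ZMod 2 → ℤˣ := fun c => if c = 0 then 1 else -1

/-- Exponent (mod 2) with which `(v, bᵐ)` inverts the generator `aᵢ`:
`a₁` is inverted by `d₂, d₃`, `a₂` by `d₁, d₃`, `a₃` by `d₁, d₂`, and every `aᵢ` by `b`. -/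
def sv : ZMod 2 × ZMod 2 → Fin 3 → ZMod 2 := fun v => ![v.2, v.1, v.1 + v.2]

/-- The sign with which `p = (v, bᵐ)` acts on `aᵢ`. -/
def expo : TopG → Fin 3 → ℤˣ :=
  fun p i => sgn ((Multiplicative.toAdd p.2 : ℤ) : ZMod 2) * sgn (sv (Multiplicative.toAdd p.1) i)

/-- The automorphism of `ℤ³` raising the `i`-th coordinate to the power `e i`. -/
def act (e : Fin 3 → ℤˣ) : MulAut Z3 where
  toFun f := fun i => f i ^ ((e i : ℤˣ) : ℤ)
  invFun f := fun i => f i ^ ((e i : ℤˣ) : ℤ)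
  left_inv f := by
    funext i
    show (f i ^ ((e i : ℤˣ) : ℤ)) ^ ((e i : ℤˣ) : ℤ) = f i
    rw [← zpow_mul, ← Units.val_mul, Int.units_mul_self, Units.val_one, zpow_one]
  right_inv f := by
    funext i
    show (f i ^ ((e i : ℤˣ) : ℤ)) ^ ((e i : ℤˣ) : ℤ) = f i
    rw [← zpow_mul, ← Units.val_mul, Int.units_mul_self, Units.val_one, zpow_one]
  map_mul' f g := by
    funext i
    exact mul_zpow _ _ _

/-- The action of `V₄ × ⟨b⟩` on `ℤ³`. -/
def phi : TopG →* MulAut Z3 :=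
  MonoidHom.mk' (fun p => act (expo p)) (by
    intro p q
    ext f i
    show f i ^ ((expo (p * q) i : ℤˣ) : ℤ) = (f i ^ ((expo q i : ℤˣ) : ℤ)) ^ ((expo p i : ℤˣ) : ℤ)
    rw [← zpow_mul, ← Units.val_mul]
    congr 2
    simp only [expo, sv, Prod.fst_mul, Prod.snd_mul, toAdd_mul, Int.cast_add, Prod.mk_mul_mk]
    have hsgn : ∀ c d : ZMod 2, sgn (c + d) = sgn c * sgn d := by decide
    fin_cases i <;> simp [sv, Prod.fst_add, Prod.snd_add, hsgn] <;> ac_rfl)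

/-- The group `G = (V₄ × ⟨b⟩) ⋉ ℤ³`. -/
abbrev Gex := SemidirectProduct Z3 TopG phi

/-- The generator `aᵢ` of the base `ℤ³`. -/
def agen (i : Fin 3) : Gex := SemidirectProduct.inl (Pi.mulSingle i (Multiplicative.ofAdd (1:ℤ)))

/-- The element `a = a₁a₂a₃`. -/
def aG : Gex := agen 0 * agen 1 * agen 2

/-- The element `b`. -/
def bG : Gex := SemidirectProduct.inr ((1 : V4), Multiplicative.ofAdd (1:ℤ))

/-- The elements `d₁, d₂, d₃` (indexed by the nonzero elements of `V₄`). -/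
def dG (v : V4) : Gex := SemidirectProduct.inr (v, 1)


lemma phi_apply (p : TopG) (f : Z3) (i : Fin 3) :
    phi p f i = f i ^ ((expo p i : ℤˣ) : ℤ) := rfl

lemma expo_const (p : TopG) (hp : p.1 = 1) (i : Fin 3) : expo p i = expo p 0 := by
  have : Multiplicative.toAdd p.1 = (0, 0) := by rw [hp]; rfl
  simp only [expo, this]
  congr 1
  fin_cases i <;> rfl

lemma mem_prop : ∀ g ∈ Subgroup.closure {aG, bG},
    g.right.1 = 1 ∧ ∀ i : Fin 3, g.left i = g.left 0 := by
  intro g hg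
  induction hg using Subgroup.closure_induction with
  | mem x hx =>
    rcases hx with h | h
    · subst h
      constructor
      · rfl
      · intro i
        show (agen 0 * agen 1 * agen 2).left i = _
        simp only [SemidirectProduct.mul_left, agen, SemidirectProduct.left_inl,
          SemidirectProduct.right_inl, SemidirectProduct.mul_right, mul_one, map_one]
        fin_cases i <;> decide
    · subst h
      exact ⟨rfl, fun i => rfl⟩
  | one => exact ⟨rfl, fun i => rfl⟩
  | mul x y hx hy ihx ihy =>
    refine ⟨?_, ?_⟩
    · show x.right.1 * y.right.1 = 1
      rw [ihx.1, ihy.1, one_mul]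
    · intro i
      show x.left i * phi x.right y.left i = x.left 0 * phi x.right y.left 0
      rw [phi_apply, phi_apply, ihx.2 i, ihy.2 i, expo_const x.right ihx.1 i]
  | inv x hx ihx =>
    refine ⟨?_, ?_⟩
    · show (x.right⁻¹).1 = 1
      rw [Prod.fst_inv, ihx.1, inv_one]
    · intro i
      show phi x.right⁻¹ x.left⁻¹ i = phi x.right⁻¹ x.left⁻¹ 0
      rw [phi_apply, phi_apply, Pi.inv_apply, Pi.inv_apply, ihx.2 i,
        expo_const x.right⁻¹ (by rw [Prod.fst_inv, ihx.1, inv_one]) i]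

lemma sq_one_eq_one {g : Gex} (hg : g ∈ Subgroup.closure {aG, bG}) (h : g * g = 1) :
    g = 1 := by
  obtain ⟨h1, h2⟩ := mem_prop g hg
  have hr : g.right * g.right = 1 := congrArg SemidirectProduct.right h
  have hr2 : g.right.2 * g.right.2 = 1 := congrArg Prod.snd hr
  have hm : (Multiplicative.toAdd g.right.2 : ℤ) + Multiplicative.toAdd g.right.2 = 0 := by
    have := congrArg Multiplicative.toAdd hr2
    simpa using this
  have hright : g.right = 1 := by
    have : g.right.2 = 1 := by
      have : (Multiplicative.toAdd g.right.2 : ℤ) = 0 := by omega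
      simpa using congrArg Multiplicative.ofAdd this
    exact Prod.ext h1 this
  have hl : g.left * phi g.right g.left = 1 := congrArg SemidirectProduct.left h
  rw [hright, map_one] at hl
  have hleft : g.left = 1 := by
    funext i
    have := congrArg (fun f => f i) hl
    simp only [Pi.mul_apply, MulAut.one_apply, Pi.one_apply] at this
    have h2 : (Multiplicative.toAdd (g.left i) : ℤ) + Multiplicative.toAdd (g.left i) = 0 := by
      have := congrArg Multiplicative.toAdd this
      simpa using this
    have : (Multiplicative.toAdd (g.left i) : ℤ) = 0 := by omega
    simpa using congrArg Multiplicative.ofAdd this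
  exact SemidirectProduct.ext hleft hright

lemma rho_dG_one {ρ : Gex →* (Subgroup.closure {aG, bG} : Subgroup Gex)} (v : V4) :
    ρ (dG v) = 1 := by
  have hvv : dG v * dG v = 1 := by
    rw [dG, ← map_mul]
    have : (v, (1 : Multiplicative ℤ)) * (v, 1) = 1 := by
      have : v * v = 1 := by
        revert v; decide
      rw [Prod.mk_mul_mk, this, mul_one]; rfl
    rw [this, map_one]
  have : ρ (dG v) * ρ (dG v) = 1 := by rw [← map_mul, hvv, map_one]
  have hc : ((ρ (dG v) : Gex)) * ((ρ (dG v) : Gex)) = 1 := by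
    exact_mod_cast congrArg (Subtype.val) this
  exact Subtype.ext (sq_one_eq_one (ρ (dG v)).2 hc)

lemma conj_agen (v : V4) (i : Fin 3) (he : expo (v, 1) i = -1) :
    dG v * agen i * (dG v)⁻¹ = (agen i)⁻¹ := by
  rw [agen, dG]
  have hinv : (SemidirectProduct.inr ((v, 1) : TopG) : Gex)⁻¹ =
      SemidirectProduct.inr (((v, 1) : TopG)⁻¹) := (map_inv _ _).symm
  rw [hinv, ← SemidirectProduct.inl_aut, ← map_inv]
  congr 1
  funext j
  rw [phi_apply]
  by_cases hji : j = i
  · subst hji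
    rw [he]
    simp [Pi.mulSingle]
  · simp [Pi.mulSingle, Function.update, hji]

lemma rho_agen_one {ρ : Gex →* (Subgroup.closure {aG, bG} : Subgroup Gex)}
    (v : V4) (i : Fin 3) (he : expo (v, 1) i = -1) : ρ (agen i) = 1 := by
  have h1 : ρ ((agen i)⁻¹) = ρ (agen i) := by
    rw [← conj_agen v i he, map_mul, map_mul, rho_dG_one, one_mul, map_inv,
      rho_dG_one, inv_one, mul_one]
  have hsq : ρ (agen i) * ρ (agen i) = 1 := by
    nth_rewrite 1 [← h1]
    rw [← map_mul, inv_mul_cancel, map_one]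
  have hc : ((ρ (agen i) : Gex)) * ((ρ (agen i) : Gex)) = 1 :=
    by exact_mod_cast congrArg Subtype.val hsq
  exact Subtype.ext (sq_one_eq_one (ρ (agen i)).2 hc)

/-- The subgroup `K = ⟨a₁a₂a₃, b⟩` is not a retract of `G = (V₄ × ⟨b⟩) ⋉ ℤ³`:
there is no homomorphism `ρ : G → K` restricting to the identity on `K`. -/
theorem K_not_retract :
    ¬ ∃ ρ : Gex →* (Subgroup.closure {aG, bG} : Subgroup Gex),
        ∀ k : (Subgroup.closure {aG, bG} : Subgroup Gex), ρ (↑k) = k := by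
  rintro ⟨ρ, hρ⟩
  have h0 : ρ (agen 0) = 1 :=
    rho_agen_one (Multiplicative.ofAdd ((0, 1) : ZMod 2 × ZMod 2)) 0 (by decide)
  have h1 : ρ (agen 1) = 1 :=
    rho_agen_one (Multiplicative.ofAdd ((1, 0) : ZMod 2 × ZMod 2)) 1 (by decide)
  have h2 : ρ (agen 2) = 1 :=
    rho_agen_one (Multiplicative.ofAdd ((1, 0) : ZMod 2 × ZMod 2)) 2 (by decide)
  have haG1 : ρ aG = 1 := by
    calc ρ aG = ρ (agen 0) * ρ (agen 1) * ρ (agen 2) := by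
          rw [← map_mul, ← map_mul]; rfl
      _ = 1 := by rw [h0, h1, h2, mul_one, mul_one]
  have haGmem : aG ∈ Subgroup.closure {aG, bG} :=
    Subgroup.subset_closure (Set.mem_insert _ _)
  have : ρ aG = ⟨aG, haGmem⟩ := hρ ⟨aG, haGmem⟩
  rw [haG1] at this
  have haG : aG = 1 := (congrArg Subtype.val this).symm
  have : aG.left 0 = 1 := by rw [haG]; rfl
  have hval : aG.left 0 = Multiplicative.ofAdd (1 : ℤ) := by
    show (agen 0 * agen 1 * agen 2).left 0 = _
    simp only [SemidirectProduct.mul_left, agen, SemidirectProduct.left_inl,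
      SemidirectProduct.right_inl, SemidirectProduct.mul_right, mul_one, map_one]
    decide
  rw [hval] at this
  exact absurd this (by decide)
end

section
/- If V(G) is a verbal subgroup of a group G and H is a verbally closed subgroup of G, then H ∩ V(G) = V(H), the verbal subgroup of H corresponding to the same set of words. -/
/-- `H` is verbally closed in `G`: every equation `w(x₁,x₂,…) = h` with `h ∈ H`,
`w` a word in the free group, that has a solution in `G` has a solution in `H`. -/
def VerballyClosed {G : Type*} [Group G] (H : Subgroup G) : Prop :=
  ∀ (w : FreeGroup ℕ) (h : G), h ∈ H → (∃ g : ℕ → G, FreeGroup.lift g w = h) →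
    ∃ k : ℕ → G, (∀ n, k n ∈ H) ∧ FreeGroup.lift k w = h

/-- The verbal subgroup of `G` corresponding to a set of words `W`: the subgroup
generated by all values of the words of `W` in `G`. -/
def verbalSubgroup (W : Set (FreeGroup ℕ)) (G : Type*) [Group G] : Subgroup G :=
  Subgroup.closure {x : G | ∃ w ∈ W, ∃ g : ℕ → G, FreeGroup.lift g w = x}

/-! Every element of `V(G)` is the value in `G` of a single word `u ∈ V(F)`, where
`F` is the free group on `ℕ` (multiply words after renaming their variables apart). If the
value lies in `H`, verbal closedness solves `u = x` in `H`, and `V(F)` maps into `V(H)` under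
every homomorphism `F →* H`. -/

namespace FreeGroup

theorem apply_lift {α G K : Type*} [Group G] [Group K] (f : G →* K) (g : α → G)
    (w : FreeGroup α) : f (lift g w) = lift (f ∘ g) w :=
  DFunLike.congr_fun (ext_hom _ _ fun _ ↦ by simp : f.comp (lift g) = lift (f ∘ g)) w

theorem lift_map {α β G : Type*} [Group G] (e : α → β) (g : β → G) (w : FreeGroup α) :
    lift g (map e w) = lift (g ∘ e) w :=
  DFunLike.congr_fun (ext_hom _ _ fun _ ↦ by simp : (lift g).comp (map e) = lift (g ∘ e)) w

end FreeGroup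

open FreeGroup

section

variable (W : Set (FreeGroup ℕ))

theorem lift_mem_verbalSubgroup {G : Type*} [Group G] {w : FreeGroup ℕ} (hw : w ∈ W)
    (g : ℕ → G) : lift g w ∈ verbalSubgroup W G :=
  Subgroup.subset_closure ⟨w, hw, g, rfl⟩

theorem verbalSubgroup_map_le {G K : Type*} [Group G] [Group K] (f : G →* K) :
    (verbalSubgroup W G).map f ≤ verbalSubgroup W K := by
  rw [verbalSubgroup, MonoidHom.map_closure, Subgroup.closure_le]
  rintro _ ⟨_, ⟨w, hw, g, rfl⟩, rfl⟩
  rw [SetLike.mem_coe, apply_lift]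
  exact lift_mem_verbalSubgroup W hw _

theorem map_mem_verbalSubgroup {G K : Type*} [Group G] [Group K] (f : G →* K)
    {x : G} (hx : x ∈ verbalSubgroup W G) : f x ∈ verbalSubgroup W K :=
  verbalSubgroup_map_le W f ⟨x, hx, rfl⟩

theorem exists_lift_eq_of_mem_verbalSubgroup {G : Type*} [Group G] {x : G}
    (hx : x ∈ verbalSubgroup W G) :
    ∃ u ∈ verbalSubgroup W (FreeGroup ℕ), ∃ g : ℕ → G, lift g u = x := by
  induction hx using Subgroup.closure_induction with
  | mem _ hx =>
    obtain ⟨w, hw, g, rfl⟩ := hx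
    exact ⟨w, Subgroup.subset_closure ⟨w, hw, of, lift_of_apply w⟩, g, rfl⟩
  | one => exact ⟨1, one_mem _, fun _ ↦ 1, map_one _⟩
  | mul _ _ _ _ ih₁ ih₂ =>
    obtain ⟨u₁, hu₁, g₁, rfl⟩ := ih₁
    obtain ⟨u₂, hu₂, g₂, rfl⟩ := ih₂
    let e := Equiv.natSumNatEquivNat
    refine ⟨map (e ∘ Sum.inl) u₁ * map (e ∘ Sum.inr) u₂,
      mul_mem (map_mem_verbalSubgroup W _ hu₁) (map_mem_verbalSubgroup W _ hu₂),
      Sum.elim g₁ g₂ ∘ e.symm, ?_⟩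
    simp only [_root_.map_mul, lift_map]
    congr 2 <;> ext <;> simp
  | inv _ _ ih =>
    obtain ⟨u, hu, g, rfl⟩ := ih
    exact ⟨u⁻¹, inv_mem hu, g, map_inv _ _⟩

end

/-- If `V(G)` is a verbal subgroup of `G` and `H` is verbally closed in `G`,
then `H ∩ V(G) = V(H)` (the verbal subgroup of `H` for the same set of words,
viewed inside `G` via the inclusion). -/
theorem inf_verbal_eq_verbal {G : Type*} [Group G] (H : Subgroup G)
    (hvc : VerballyClosed H) (W : Set (FreeGroup ℕ)) :
    H ⊓ verbalSubgroup W G = (verbalSubgroup W ↥H).map H.subtype := by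
  refine le_antisymm ?_ (le_inf (Subgroup.map_subtype_le _) (verbalSubgroup_map_le W _))
  rintro x ⟨hxH, hxV⟩
  obtain ⟨u, hu, g, hgu⟩ := exists_lift_eq_of_mem_verbalSubgroup W hxV
  obtain ⟨k, hkH, rfl⟩ := hvc u x hxH ⟨g, hgu⟩
  let k' : ℕ → H := fun n ↦ ⟨k n, hkH n⟩
  exact ⟨lift k' u, map_mem_verbalSubgroup W (lift k') hu, apply_lift H.subtype k' u⟩
end

section
/- If the Klein bottle group K = ⟨a, b | a^b = a⁻¹⟩ is a verbally closed subgroup of a group G, then ⟨⟨b²⟩⟩ ∩ K = ⟨b²⟩, where ⟨⟨b²⟩⟩ is the normal closure of b² in G. -/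
open Subgroup

section VerballyClosed

open FreeGroup

variable {G : Type*} [Group G]

theorem Subgroup.map_mem_normalClosure_singleton {N : Type*} [Group N] (f : G →* N) {x g : G}
    (hg : g ∈ normalClosure {x}) : f g ∈ normalClosure {f x} := by
  simpa using map_normalClosure_le {x} f (mem_map_of_mem f hg)

theorem FreeGroup.lift_map_apply {α β : Type*} (c : β → G) (f : α → β) (w : FreeGroup α) :
    lift c (map f w) = lift (c ∘ f) w := by
  induction w using FreeGroup.induction_on <;> simp_all

theorem FreeGroup.map_mem_normalClosure_of_zero_pow {f : ℕ → ℕ} (hf : f 0 = 0) {m : ℕ}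
    {w : FreeGroup ℕ} (hw : w ∈ normalClosure {(of 0 : FreeGroup ℕ) ^ m}) :
    map f w ∈ normalClosure {(of 0 : FreeGroup ℕ) ^ m} := by
  simpa [hf] using map_mem_normalClosure_singleton (map f) hw

theorem exists_word_of_mem_normalClosure {y g : G} {m : ℕ} (hg : g ∈ normalClosure {y ^ m}) :
    ∃ w ∈ normalClosure {(of 0 : FreeGroup ℕ) ^ m}, ∃ c : ℕ → G, c 0 = y ∧ lift c w = g := by
  induction hg using closure_induction with
  | mem g hg =>
    obtain ⟨_, rfl, hconj⟩ := Group.mem_conjugatesOfSet_iff.1 hg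
    obtain ⟨z, rfl⟩ := isConj_iff.1 hconj
    have hmem : (of 1 : FreeGroup ℕ) * of 0 ^ m * (of 1)⁻¹ ∈
        normalClosure {(of 0 : FreeGroup ℕ) ^ m} :=
      normalClosure_normal.conj_mem _ (subset_normalClosure (Set.mem_singleton _)) _
    refine ⟨_, hmem, fun n => if n = 0 then y else z, if_pos rfl, ?_⟩
    simp
  | one => exact ⟨1, one_mem _, fun _ => y, rfl, map_one _⟩
  | inv g _ ih =>
    obtain ⟨w, hw, c, hc, rfl⟩ := ih
    exact ⟨w⁻¹, inv_mem hw, c, hc, map_inv _ _⟩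
  | mul g h _ _ ihg ihh =>
    -- rename the variables of the two words apart, except the shared variable `0`
    obtain ⟨w₁, hw₁, c₁, hc₁, rfl⟩ := ihg
    obtain ⟨w₂, hw₂, c₂, hc₂, rfl⟩ := ihh
    let c : ℕ → G := fun n => if Even n then c₁ (n / 2) else c₂ (n / 2 + 1)
    have h₁ : c ∘ (2 * ·) = c₁ := by funext n; simp [c]
    have h₂ : c ∘ (2 * · - 1) = c₂ := by
      funext n
      rcases n with _ | n
      · simp [c, hc₁, hc₂]
      · simp [c, show 2 * (n + 1) - 1 = 2 * n + 1 by omega, show (2 * n + 1) / 2 = n by omega]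
    refine ⟨map (2 * ·) w₁ * map (2 * · - 1) w₂, mul_mem
      (map_mem_normalClosure_of_zero_pow rfl hw₁) (map_mem_normalClosure_of_zero_pow rfl hw₂),
      c, by simp [c, hc₁], ?_⟩
    simp [lift_map_apply, h₁, h₂]

theorem VerballyClosed.exists_mem_normalClosure {K : Type*} [Group K] {φ : K →* G}
    (hvc : VerballyClosed φ.range) {y g : G} {m : ℕ} (e : ℕ) (hg : g ∈ normalClosure {y ^ m})
    (hge : g * y ^ e ∈ φ.range) :
    ∃ l ν : K, ν ∈ normalClosure {l ^ m} ∧ φ (ν * l ^ e) = g * y ^ e := by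
  obtain ⟨w, hw, c, hc, rfl⟩ := exists_word_of_mem_normalClosure hg
  obtain ⟨k, hk, hkw⟩ := hvc (w * of 0 ^ e) _ hge ⟨c, by simp [hc]⟩
  choose l hl using hk
  have hφl : ∀ v, φ (lift l v) = lift k v := fun v =>
    lift_unique (φ.comp (lift l)) (fun n => by simp [hl])
  refine ⟨l 0, lift l w, by simpa using map_mem_normalClosure_singleton (lift l) hw, ?_⟩
  simpa [hφl, hl] using hkw

end VerballyClosed

/-- `⟨x, y⟩` stands for `a ^ x * b ^ y`, so `K ≅ ℤ ⋊ ℤ` with `b` acting on `⟨a⟩` by inversion. -/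
@[ext] structure KleinModel where
  x : ℤ
  y : ℤ

namespace KleinModel

instance : Mul KleinModel := ⟨fun p q => ⟨p.x + p.y.negOnePow * q.x, p.y + q.y⟩⟩
instance : One KleinModel := ⟨⟨0, 0⟩⟩
instance : Inv KleinModel := ⟨fun p => ⟨-(p.y.negOnePow * p.x), -p.y⟩⟩

@[simp] theorem mul_x (p q : KleinModel) : (p * q).x = p.x + p.y.negOnePow * q.x := rfl
@[simp] theorem mul_y (p q : KleinModel) : (p * q).y = p.y + q.y := rfl
@[simp] theorem one_x : (1 : KleinModel).x = 0 := rfl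
@[simp] theorem one_y : (1 : KleinModel).y = 0 := rfl
@[simp] theorem inv_x (p : KleinModel) : p⁻¹.x = -(p.y.negOnePow * p.x) := rfl
@[simp] theorem inv_y (p : KleinModel) : p⁻¹.y = -p.y := rfl

instance : Group KleinModel where
  mul_assoc p q r := by
    ext <;> simp only [mul_x, mul_y, Int.negOnePow_add, Units.val_mul] <;> ring
  one_mul p := by ext <;> simp
  mul_one p := by ext <;> simp
  inv_mul_cancel p := by ext <;> simp [Int.negOnePow_neg]

def a : KleinModel := ⟨1, 0⟩
def b : KleinModel := ⟨0, 1⟩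

theorem a_zpow (n : ℤ) : a ^ n = ⟨n, 0⟩ := by
  induction n using Int.induction_on with
  | zero => rfl
  | succ n ih => rw [zpow_add_one, ih]; ext <;> simp [a]
  | pred n ih => rw [zpow_sub_one, ih]; ext <;> simp [a, sub_eq_add_neg]

theorem b_zpow (n : ℤ) : b ^ n = ⟨0, n⟩ := by
  induction n using Int.induction_on with
  | zero => rfl
  | succ n ih => rw [zpow_add_one, ih]; ext <;> simp [b]
  | pred n ih => rw [zpow_sub_one, ih]; ext <;> simp [b, sub_eq_add_neg]

theorem sq_x (p : KleinModel) : (p ^ 2).x = p.x + p.y.negOnePow * p.x := by simp [sq]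
theorem sq_y (p : KleinModel) : (p ^ 2).y = 2 * p.y := by simp [sq, two_mul]

theorem sq_x_eq_zero_of_odd {p : KleinModel} (h : Odd p.y) : (p ^ 2).x = 0 := by
  simp [sq_x, Int.negOnePow_odd _ h]

def dvdSubgroup (u n : ℤ) : Subgroup KleinModel where
  carrier := {p | u ∣ p.x ∧ 2 * n ∣ p.y}
  one_mem' := ⟨dvd_zero u, dvd_zero _⟩
  mul_mem' := fun ⟨hx, hy⟩ ⟨hx', hy'⟩ => ⟨dvd_add hx (hx'.mul_left _), dvd_add hy hy'⟩
  inv_mem' := fun ⟨hx, hy⟩ => ⟨(hx.mul_left _).neg_right, hy.neg_right⟩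

theorem mem_dvdSubgroup {u n : ℤ} {p : KleinModel} :
    p ∈ dvdSubgroup u n ↔ u ∣ p.x ∧ 2 * n ∣ p.y := Iff.rfl

-- conjugating an element with even `y` only changes the sign of `x`
instance (u n : ℤ) : (dvdSubgroup u n).Normal where
  conj_mem p := fun ⟨hx, hy⟩ r => by
    have hpy : Even p.y := even_iff_two_dvd.2 ((dvd_mul_right 2 n).trans hy)
    refine ⟨?_, by simpa using hy⟩
    have : (r * p * r⁻¹).x = r.y.negOnePow * p.x := by
      simp only [mul_x, inv_x, mul_y, Int.negOnePow_add, Int.negOnePow_even _ hpy, mul_one]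
      linear_combination (-r.x) * Int.units_coe_mul_self r.y.negOnePow
    exact this ▸ hx.mul_left _

theorem normalClosure_sq_le (l : KleinModel) :
    normalClosure {l ^ 2} ≤ dvdSubgroup (l ^ 2).x l.y :=
  normalClosure_le_normal (Set.singleton_subset_iff.2 ⟨dvd_rfl, (sq_y l).symm.dvd⟩)

theorem exists_eq_a_zpow_mul_b_sq_zpow {l ν : KleinModel} (hν : ν ∈ normalClosure {l ^ 2}) :
    ∃ x t : ℤ, ν = a ^ x * (b ^ 2) ^ t := by
  obtain ⟨t, ht⟩ : 2 ∣ ν.y :=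
    (dvd_mul_right 2 l.y).trans (mem_dvdSubgroup.1 (normalClosure_sq_le l hν)).2
  refine ⟨ν.x, t, ?_⟩
  rw [a_zpow, ← zpow_natCast, ← zpow_mul, b_zpow]
  ext <;> simp [ht]

-- `2 * l.y ∣ 2` makes `l.y` odd, and then `l ^ 2 = b ^ (2 * l.y)`
theorem eq_zero_of_a_zpow_mul_b_sq_mem {l : KleinModel} {x : ℤ}
    (h : a ^ x * b ^ 2 ∈ normalClosure {l ^ 2}) : x = 0 := by
  obtain ⟨hx, hy⟩ := mem_dvdSubgroup.1 (normalClosure_sq_le l h)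
  have hy : 2 * l.y ∣ 2 * 1 := by simpa [a_zpow, b, sq] using hy
  have hodd : Odd l.y :=
    Int.not_even_iff_odd.1 (mt ((mul_dvd_mul_iff_left two_ne_zero).1 hy).even Int.not_even_one)
  rw [sq_x_eq_zero_of_odd hodd, zero_dvd_iff] at hx
  simpa [a_zpow, b, sq] using hx

theorem normalClosure_sq_inf_range {G : Type*} [Group G] (φ : KleinModel →* G)
    (hinj : Function.Injective φ) (hvc : VerballyClosed φ.range) :
    normalClosure {φ b ^ 2} ⊓ φ.range = closure {φ b ^ 2} := by
  refine le_antisymm ?_ ((closure_le _).2 (Set.singleton_subset_iff.2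
    ⟨subset_normalClosure (Set.mem_singleton _), b ^ 2, map_pow φ b 2⟩))
  rintro g ⟨hgN, hgR⟩
  obtain ⟨l, ν, hν, hφν⟩ := hvc.exists_mem_normalClosure 0 hgN (by simpa using hgR)
  simp only [pow_zero, mul_one] at hφν
  obtain ⟨x, t, rfl⟩ := exists_eq_a_zpow_mul_b_sq_zpow hν
  have hb : φ ((b ^ 2) ^ t) ∈ closure {φ b ^ 2} := by
    rw [map_zpow, map_pow]
    exact zpow_mem (subset_closure (Set.mem_singleton _)) t
  have haN : φ (a ^ x) ∈ normalClosure {φ b ^ 2} := by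
    rw [← mul_inv_cancel_right (φ (a ^ x)) (φ ((b ^ 2) ^ t)), ← map_mul, hφν]
    exact mul_mem hgN (inv_mem (closure_le_normalClosure hb))
  obtain ⟨l', ν', hν', hφν'⟩ := hvc.exists_mem_normalClosure 2 haN
    (mul_mem ⟨_, rfl⟩ ⟨b ^ 2, map_pow φ b 2⟩)
  rw [← map_pow, ← map_mul] at hφν'
  have hx : x = 0 := eq_zero_of_a_zpow_mul_b_sq_mem
    (hinj hφν' ▸ mul_mem hν' (subset_normalClosure (Set.mem_singleton _)))
  rwa [← hφν, hx, zpow_zero, one_mul]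

end KleinModel

theorem semiconjBy_bK_aK : SemiconjBy bK aK aK⁻¹ := by
  have hrel : bK⁻¹ * aK * bK * aK = 1 := PresentedGroup.one_of_mem (Set.mem_singleton _)
  calc bK * aK = aK⁻¹ * bK * (bK⁻¹ * aK * bK * aK) := by group
    _ = aK⁻¹ * bK := by rw [hrel, mul_one]

theorem semiconjBy_bK_zpow_aK_zpow (x y : ℤ) :
    SemiconjBy (bK ^ y) (aK ^ x) (aK ^ ((y.negOnePow : ℤ) * x)) := by
  have hb (x : ℤ) : SemiconjBy bK (aK ^ x) (aK ^ (-x)) := by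
    simpa [zpow_neg] using semiconjBy_bK_aK.zpow_right x
  induction y using Int.induction_on generalizing x with
  | zero => simp
  | succ y ih =>
    rw [zpow_add_one, Int.negOnePow_succ]
    simpa using (ih (-x)).mul_left (hb x)
  | pred y ih =>
    rw [zpow_sub_one, Int.negOnePow_sub]
    simpa using (ih (-x)).mul_left (by simpa using (hb (-x)).inv_symm_left)

def kleinToModel : KleinGroup →* KleinModel :=
  PresentedGroup.toGroup (f := ![KleinModel.a, KleinModel.b]) (by
    rintro _ rfl
    ext <;> simp [KleinModel.a, KleinModel.b])

def modelToKlein : KleinModel →* KleinGroup where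
  toFun p := aK ^ p.x * bK ^ p.y
  map_one' := by simp
  map_mul' p q := by
    simp only [KleinModel.mul_x, KleinModel.mul_y, zpow_add, mul_assoc]
    rw [← mul_assoc (bK ^ p.y), (semiconjBy_bK_zpow_aK_zpow _ _).eq, mul_assoc]

def kleinEquiv : KleinGroup ≃* KleinModel :=
  MonoidHom.toMulEquiv kleinToModel modelToKlein
    (PresentedGroup.ext fun i => by
      fin_cases i <;> simp [kleinToModel, modelToKlein, KleinModel.a, KleinModel.b, aK, bK])
    (by ext p <;> simp [kleinToModel, modelToKlein, KleinModel.a_zpow, KleinModel.b_zpow, aK, bK])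

theorem kleinEquiv_symm_b : kleinEquiv.symm KleinModel.b = bK := by
  simp [kleinEquiv, modelToKlein, KleinModel.b]

/-- If the Klein bottle group `K = ⟨a,b ∣ aᵇ = a⁻¹⟩` is verbally closed in `G`,
then `⟨⟨b²⟩⟩ ∩ K = ⟨b²⟩`, where `⟨⟨b²⟩⟩` is the normal closure of `b²` in `G`. -/
theorem normalClosure_inf_K {G : Type*} [Group G] (φ : KleinGroup →* G)
    (hinj : Function.Injective φ) (hvc : VerballyClosed φ.range) :
    Subgroup.normalClosure {φ bK ^ 2} ⊓ φ.range = Subgroup.closure {φ bK ^ 2} := by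
  let φ' : KleinModel →* G := φ.comp kleinEquiv.symm.toMonoidHom
  have hrange : φ'.range = φ.range := by
    rw [MonoidHom.range_comp, (MonoidHom.range_eq_top (f := kleinEquiv.symm.toMonoidHom)).2
      kleinEquiv.symm.surjective, ← MonoidHom.range_eq_map]
  have hb : φ' KleinModel.b = φ bK := congrArg φ kleinEquiv_symm_b
  have := KleinModel.normalClosure_sq_inf_range φ' (hinj.comp kleinEquiv.symm.injective)
    (hrange ▸ hvc)
  rwa [hrange, hb] at this
end

section
/- Let H ≤ G with H equationally Noetherian. If H is algebraically closed in G, then H is a retract of every subgroup of G of the form ⟨H ∪ X⟩ with X ⊆ G finite; conversely, if H is a retract of each such finitely-generated-over-H subgroup, then H is algebraically closed in G. -/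
/-- `H ≤ G` is algebraically closed in `G`: every finite system of equations with
coefficients in `H` (words in `H * F(x₁, …, xₙ)`, encoded as elements of the free
group on `↥H ⊕ Fin n`, with the letters from `H` evaluated via the inclusion)
which is solvable in `G` is solvable in `H`. -/
def AlgebraicallyClosed {G : Type*} [Group G] (H : Subgroup G) : Prop :=
  ∀ (n : ℕ) (S : Finset (FreeGroup (↥H ⊕ Fin n))),
    (∃ g : Fin n → G,
        ∀ w ∈ S, FreeGroup.lift (Sum.elim (fun h : ↥H => (h : G)) g) w = 1) →
      ∃ k : Fin n → G, (∀ i, k i ∈ H) ∧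
        ∀ w ∈ S, FreeGroup.lift (Sum.elim (fun h : ↥H => (h : G)) k) w = 1

/-- `H` is equationally Noetherian: every system of equations over `H` in finitely
many unknowns is equivalent (over `H`) to a finite subsystem. -/
def EquationallyNoetherian {G : Type*} [Group G] (H : Subgroup G) : Prop :=
  ∀ (n : ℕ) (S : Set (FreeGroup (↥H ⊕ Fin n))),
    ∃ T : Finset (FreeGroup (↥H ⊕ Fin n)), ↑T ⊆ S ∧
      ∀ k : Fin n → ↥H,
        ((∀ w ∈ S, FreeGroup.lift (Sum.elim id k) w = 1) ↔
          (∀ w ∈ T, FreeGroup.lift (Sum.elim id k) w = 1))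

/-- `H` is a retract of `M`: there is an endomorphism of `M` with image inside `H`
fixing `H` pointwise. -/
def IsRetractOf {G : Type*} [Group G] (H M : Subgroup G) : Prop :=
  ∃ ρ : ↥M →* ↥M, (∀ x : ↥M, (ρ x : G) ∈ H) ∧ ∀ x : ↥M, (x : G) ∈ H → ρ x = x

/-! Enumerate `X` as a tuple `g`. By equational Noetherianity the equations over `H` satisfied
by `g` are consequences of finitely many of them, and algebraic closedness solves those by a
tuple `k` in `H`; so `k` satisfies every equation of `g`, and `w(g) ↦ w(k)` is a well-defined
retraction of `⟨H, X⟩ = ⟨H, g⟩` onto `H`. Conversely, a retraction `ρ` of `⟨H, g⟩` onto `H`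
fixes the coefficients, so it carries a solution `g` of a system over `H` to the solution
`ρ ∘ g` in `H`. -/

namespace Subgroup

variable {G : Type*} [Group G] (H : Subgroup G) {ι : Type*}

abbrev evalAt (g : ι → G) : FreeGroup (↥H ⊕ ι) →* G :=
  FreeGroup.lift (Sum.elim (fun h : ↥H => (h : G)) g)

variable {H}

theorem coe_lift_sumElim_id (k : ι → ↥H) (w : FreeGroup (↥H ⊕ ι)) :
    (FreeGroup.lift (Sum.elim id k) w : G) = H.evalAt (fun i => (k i : G)) w := by
  rw [← H.coe_subtype, ← MonoidHom.comp_apply]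
  congr 1
  exact FreeGroup.ext_hom _ _ (by rintro (h | i) <;> simp)

theorem range_evalAt (g : ι → G) :
    (H.evalAt g).range = closure ((H : Set G) ∪ Set.range g) := by
  rw [FreeGroup.range_lift_eq_closure, Set.Sum.elim_range, Subtype.range_coe_subtype]
  rfl

theorem le_range_evalAt (g : ι → G) : H ≤ (H.evalAt g).range :=
  fun h hh => ⟨FreeGroup.of (Sum.inl ⟨h, hh⟩), by simp⟩

end Subgroup

section

open Subgroup

variable {G : Type*} [Group G] {H : Subgroup G}

theorem isRetractOf_of_hom {M : Subgroup G} (hHM : H ≤ M) (r : ↥M →* ↥H)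
    (hr : ∀ x : ↥M, (hx : (x : G) ∈ H) → r x = ⟨x, hx⟩) : IsRetractOf H M :=
  ⟨(inclusion hHM).comp r, fun x => (r x).2,
    fun x hx => Subtype.ext (congrArg Subtype.val (hr x hx) :)⟩

theorem isRetractOf_range_evalAt {ι : Type*} {g : ι → G} {k : ι → ↥H}
    (hgk : (H.evalAt g).ker ≤ (FreeGroup.lift (Sum.elim id k)).ker) :
    IsRetractOf H (H.evalAt g).range := by
  let φ := (H.evalAt g).rangeRestrict
  have hφ : φ.ker ≤ (FreeGroup.lift (Sum.elim id k)).ker := by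
    rwa [MonoidHom.ker_rangeRestrict]
  refine isRetractOf_of_hom (le_range_evalAt g)
    (φ.liftOfSurjective (MonoidHom.rangeRestrict_surjective _) ⟨_, hφ⟩) fun x hx => ?_
  have hx' : φ (FreeGroup.of (Sum.inl ⟨x, hx⟩)) = x := Subtype.ext (by simp [φ])
  conv_lhs => rw [← hx', MonoidHom.liftOfRightInverse_comp_apply]
  simp

theorem AlgebraicallyClosed.exists_ker_le (hN : EquationallyNoetherian H)
    (hAC : AlgebraicallyClosed H) {n : ℕ} (g : Fin n → G) :
    ∃ k : Fin n → ↥H, (H.evalAt g).ker ≤ (FreeGroup.lift (Sum.elim id k)).ker := by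
  obtain ⟨T, hTS, hT⟩ := hN n (H.evalAt g).ker
  obtain ⟨k, hkH, hkT⟩ := hAC n T ⟨g, fun w hw => hTS hw⟩
  refine ⟨fun i => ⟨k i, hkH i⟩, fun w hw => (hT _).2 (fun w hw => ?_) w hw⟩
  exact Subtype.ext ((coe_lift_sumElim_id _ w).trans (hkT w hw))

theorem AlgebraicallyClosed.isRetractOf_closure (hN : EquationallyNoetherian H)
    (hAC : AlgebraicallyClosed H) (X : Finset G) :
    IsRetractOf H (closure ((H : Set G) ∪ ↑X)) := by
  obtain ⟨k, hk⟩ := hAC.exists_ker_le hN (fun i => (X.equivFin.symm i : G))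
  have hX : Set.range (fun i => (X.equivFin.symm i : G)) = ↑X :=
    (X.equivFin.symm.surjective.range_comp Subtype.val).trans Subtype.range_coe
  rw [← hX, ← range_evalAt]
  exact isRetractOf_range_evalAt hk

theorem AlgebraicallyClosed.of_isRetractOf
    (hR : ∀ X : Finset G, IsRetractOf H (closure ((H : Set G) ∪ ↑X))) :
    AlgebraicallyClosed H := by
  classical
  rintro n S ⟨g, hg⟩
  set M := closure ((H : Set G) ∪ ↑(Finset.univ.image g))
  obtain ⟨ρ, hρH, hρfix⟩ := hR (Finset.univ.image g)
  have hgM : (H.evalAt g).range ≤ M := by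
    rw [range_evalAt]
    exact closure_mono (Set.union_subset_union_right _ (by simp))
  let ev := (H.evalAt g).codRestrict M fun w => hgM ⟨w, rfl⟩
  let k i := (ρ (ev (FreeGroup.of (Sum.inr i))) : G)
  have hρev : M.subtype.comp (ρ.comp ev) = H.evalAt k := by
    refine FreeGroup.ext_hom _ _ ?_
    rintro (h | i)
    · simpa [ev] using
        congrArg Subtype.val (hρfix (ev (FreeGroup.of (Sum.inl h))) (by simp [ev]))
    · simp [k]
  refine ⟨k, fun i => hρH _, fun w hw => ?_⟩
  have hw : ev w = 1 := Subtype.ext (hg w hw)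
  change H.evalAt k w = 1
  rw [← hρev, MonoidHom.comp_apply, MonoidHom.comp_apply, hw, map_one, map_one]

end

/-- An equationally Noetherian subgroup `H ≤ G` is algebraically closed in `G` iff
`H` is a retract of every subgroup of `G` finitely generated over `H`. -/
theorem algClosed_iff_retract {G : Type*} [Group G] (H : Subgroup G)
    (hN : EquationallyNoetherian H) :
    AlgebraicallyClosed H ↔
      ∀ X : Finset G, IsRetractOf H (Subgroup.closure ((H : Set G) ∪ ↑X)) :=
  ⟨fun hAC => hAC.isRetractOf_closure hN, AlgebraicallyClosed.of_isRetractOf⟩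
end
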